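/- (Closed form underlying Theorem 1.) Let u, s, t be three distinct vertices with dist(s,u) ≤ dist(t,u), and set D = dist(t,u). For d ∈ ℕ let N_{≥d} = |{v ∈ V\{s,t} : dist(v,u) ≥ d}| and N_{>d} = |{v ∈ V\{s,t} : dist(v,u) > d}|. Then the semivalue interaction index of s and t in the single-node closeness game ν_u equals I^{SEMI}_{s,t}(ν_u) = Σ_{k=0}^{n−2} (β(k)/binom(n−2,k)) · [ Σ_{d=D+1}^{Δ} f(d)·(binom(N_{≥d},k) − binom(N_{>d},k)) − f(D)·binom(N_{>D},k) ], where Δ = max_{v∈V} dist(v,u). -/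

import Mathlib

open Finset

/-!
Write `g v = dist(v,u)`, `D = g t` and `m = min_{v ∈ C} g v`. Because `g s ≤ g t`, the coalitions
`C ∪ {s,t}` and `C ∪ {s}` have the same value, so the synergy of `s` and `t` in the context of `C`
is `ν(C) - ν(C ∪ {t})`: this is `f m - f D` when `D < m` (with `f m` read as `0` for `C = ∅`)
and `0` otherwise. Since `m ≤ Δ`, the term `f m` is the sum over `d ∈ (D, Δ]` of
`f d · ([d ≤ m] - [d < m])`, and summing the indicators `[d ≤ m]`, `[d < m]` over the coalitions
of size `k` counts the `k`-subsets of `{v ≠ s, t : g v ≥ d}` and `{v ≠ s, t : g v > d}`.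
-/
/-- The single-node closeness game `ν_u`: a coalition `C` is worth `f(dist(C,u))`
(where `dist(C,u) = min_{c ∈ C} dist(c,u)`) if `C` is nonempty, and `0` otherwise. -/
noncomputable def nuSingle {V : Type*} (G : SimpleGraph V) (f : ℕ → ℝ) (u : V)
    (C : Finset V) : ℝ :=
  if h : C.Nonempty then f (C.inf' h fun c => G.dist c u) else 0

/-- The synergy of `s` and `t` in the context of a coalition `C ⊆ V \ {s,t}`:
`S_ν(C,s,t) = ν(C∪{s,t}) − ν(C∪{s}) − ν(C∪{t}) + ν(C)`. -/
noncomputable def synergy {V : Type*} [DecidableEq V] (ν : Finset V → ℝ)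
    (C : Finset V) (s t : V) : ℝ :=
  ν (insert s (insert t C)) - ν (insert s C) - ν (insert t C) + ν C

/-- The semivalue interaction index of `s` and `t` in the game `ν`, with weights `β`:
`I^{SEMI}_{s,t}(ν) = Σ_{k=0}^{n−2} Σ_{C ⊆ V\{s,t}, |C| = k} β(k)·S_ν(C,s,t)/binom(n−2,k)`. -/
noncomputable def ISemi {V : Type*} [Fintype V] [DecidableEq V]
    (β : ℕ → ℝ) (ν : Finset V → ℝ) (s t : V) : ℝ :=
  ∑ k ∈ Finset.range (Fintype.card V - 1),
    ∑ C ∈ (univ \ {s, t} : Finset V).powersetCard k,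
      β k * synergy ν C s t / ((Fintype.card V - 2).choose k : ℝ)

namespace Finset

variable {α : Type*}

theorem filter_powersetCard_forall (A : Finset α) (k : ℕ) (p : α → Prop) [DecidablePred p] :
    (A.powersetCard k).filter (fun C => ∀ v ∈ C, p v) = (A.filter p).powersetCard k := by
  ext C
  simp only [mem_filter, mem_powersetCard, subset_iff]
  grind

theorem sum_powersetCard_ite_forall {R : Type*} [AddCommMonoidWithOne R] (A : Finset α) (k : ℕ)
    (p : α → Prop) [DecidablePred p] :
    ∑ C ∈ A.powersetCard k, (if ∀ v ∈ C, p v then (1 : R) else 0)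
      = ((#(A.filter p)).choose k : R) := by
  rw [sum_boole, filter_powersetCard_forall, card_powersetCard]

theorem ite_forall_le_sub_ite_forall_lt {R : Type*} [AddGroupWithOne R] {C : Finset α} (hC : C.Nonempty)
    (g : α → ℕ) (d : ℕ) :
    ((if ∀ v ∈ C, d ≤ g v then 1 else 0) - (if ∀ v ∈ C, d < g v then 1 else 0) : R)
      = if d = C.inf' hC g then 1 else 0 := by
  simp only [← le_inf'_iff hC, ← lt_inf'_iff hC]
  rcases lt_trichotomy d (C.inf' hC g) with h | h | h
  · simp [h.le, h, h.ne]
  · simp [h]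
  · simp [h.not_ge, h.not_gt, h.ne']

end Finset

section ClosenessGame

variable {V : Type*} (G : SimpleGraph V) (f : ℕ → ℝ) (u : V)

theorem nuSingle_insert [DecidableEq V] {C : Finset V} (hC : C.Nonempty) (v : V) :
    nuSingle G f u (insert v C) = f (min (G.dist v u) (C.inf' hC fun c => G.dist c u)) := by
  rw [nuSingle, dif_pos (insert_nonempty v C), inf'_insert hC]

theorem synergy_nuSingle [DecidableEq V] {s t : V} (hd : G.dist s u ≤ G.dist t u)
    (C : Finset V) :
    synergy (nuSingle G f u) C s t
      = if ∀ v ∈ C, G.dist t u < G.dist v u then nuSingle G f u C - f (G.dist t u) else 0 := by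
  rcases C.eq_empty_or_nonempty with rfl | hC
  · simp [synergy, nuSingle, min_eq_left hd]
  · have hsC : nuSingle G f u (insert s (insert t C)) = nuSingle G f u (insert s C) := by
      rw [nuSingle_insert G f u (insert_nonempty t C), nuSingle_insert G f u hC,
        inf'_insert hC, ← min_assoc, min_eq_left hd]
    have hm : nuSingle G f u C = f (C.inf' hC fun c => G.dist c u) := by
      rw [nuSingle, dif_pos hC]
    rw [synergy, hsC, nuSingle_insert G f u hC t, nuSingle_insert G f u hC s, hm]
    split_ifs with hDm <;> rw [← lt_inf'_iff hC] at hDm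
    · rw [min_eq_left hDm.le]; ring
    · rw [min_eq_right (not_lt.mp hDm)]; ring

theorem nuSingle_eq_sum_Icc {C : Finset V} {D Δ : ℕ} (hΔ : ∀ v, G.dist v u ≤ Δ)
    (hDC : ∀ v ∈ C, D < G.dist v u) :
    nuSingle G f u C
      = ∑ d ∈ Icc (D + 1) Δ, f d * ((if ∀ v ∈ C, d ≤ G.dist v u then 1 else 0)
          - (if ∀ v ∈ C, d < G.dist v u then 1 else 0)) := by
  rcases C.eq_empty_or_nonempty with rfl | hC
  · simp [nuSingle]
  · obtain ⟨w, hw⟩ := id hC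
    have hm : C.inf' hC (fun v => G.dist v u) ∈ Icc (D + 1) Δ :=
      mem_Icc.mpr ⟨(lt_inf'_iff hC).mpr hDC, (inf'_le _ hw).trans (hΔ w)⟩
    rw [nuSingle, dif_pos hC]
    simp only [ite_forall_le_sub_ite_forall_lt hC, mul_ite, mul_one, mul_zero, sum_ite_eq',
      if_pos hm]

theorem synergy_nuSingle_eq_sum_Icc [DecidableEq V] {s t : V} (hd : G.dist s u ≤ G.dist t u)
    {Δ : ℕ} (hΔ : ∀ v, G.dist v u ≤ Δ) (C : Finset V) :
    synergy (nuSingle G f u) C s t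
      = ∑ d ∈ Icc (G.dist t u + 1) Δ, f d * ((if ∀ v ∈ C, d ≤ G.dist v u then 1 else 0)
          - (if ∀ v ∈ C, d < G.dist v u then 1 else 0))
        - f (G.dist t u) * (if ∀ v ∈ C, G.dist t u < G.dist v u then 1 else 0) := by
  rw [synergy_nuSingle G f u hd]
  split_ifs with hDC
  · rw [nuSingle_eq_sum_Icc G f u hΔ hDC, mul_one]
  · obtain ⟨v, hv, hvD⟩ : ∃ v ∈ C, G.dist v u ≤ G.dist t u := by simpa using hDC
    rw [mul_zero, sub_zero, eq_comm]
    refine sum_eq_zero fun d hd => ?_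
    have hvd : G.dist v u < d := by rw [mem_Icc] at hd; omega
    rw [if_neg fun h => absurd (h v hv) (by omega), if_neg fun h => absurd (h v hv) (by omega),
      sub_self, mul_zero]

end ClosenessGame

theorem ISemi_nuSingle_closed_form_general
    {V : Type*} [Fintype V] [DecidableEq V] (G : SimpleGraph V)
    (f : ℕ → ℝ) (β : ℕ → ℝ)
    (u s t : V)
    (hd : G.dist s u ≤ G.dist t u)
    (D : ℕ) (hD : D = G.dist t u)
    (Nge Ngt : ℕ → ℕ)
    (hNge : ∀ d, Nge d = ((univ \ {s, t} : Finset V).filter fun v => d ≤ G.dist v u).card)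
    (hNgt : ∀ d, Ngt d = ((univ \ {s, t} : Finset V).filter fun v => d < G.dist v u).card)
    (Δ : ℕ) (hΔ : Δ = univ.sup fun v => G.dist v u) :
    ISemi β (nuSingle G f u) s t
      = ∑ k ∈ Finset.range (Fintype.card V - 1),
          β k / ((Fintype.card V - 2).choose k : ℝ) *
            ((∑ d ∈ Finset.Icc (D + 1) Δ,
                f d * (((Nge d).choose k : ℝ) - ((Ngt d).choose k : ℝ)))
              - f D * ((Ngt D).choose k : ℝ)) := by
  subst hD
  have hΔle (v : V) : G.dist v u ≤ Δ := hΔ ▸ le_sup (f := fun v => G.dist v u) (mem_univ v)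
  refine sum_congr rfl fun k _ => ?_
  simp only [mul_div_right_comm (β k), ← mul_sum, synergy_nuSingle_eq_sum_Icc G f u hd hΔle,
    sum_sub_distrib]
  rw [sum_comm]
  simp only [← mul_sum, sum_sub_distrib, sum_powersetCard_ite_forall, hNge, hNgt]

/-- Closed form underlying Theorem 1: for distinct `u, s, t` with
`dist(s,u) ≤ dist(t,u)` and `D = dist(t,u)`, letting
`N_{≥d} = |{v ∈ V\{s,t} : dist(v,u) ≥ d}|`, `N_{>d} = |{v ∈ V\{s,t} : dist(v,u) > d}|`
and `Δ = max_{v ∈ V} dist(v,u)`, the semivalue interaction index of `s` and `t` in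
the single-node closeness game `ν_u` equals
`Σ_{k=0}^{n−2} (β(k)/binom(n−2,k)) · [Σ_{d=D+1}^{Δ} f(d)·(binom(N_{≥d},k) − binom(N_{>d},k))
  − f(D)·binom(N_{>D},k)]`. -/
theorem ISemi_nuSingle_closed_form
    {V : Type*} [Fintype V] [DecidableEq V] (G : SimpleGraph V)
    (hG : G.Connected) (hn : 3 ≤ Fintype.card V) (f : ℕ → ℝ) (β : ℕ → ℝ)
    (u s t : V) (hus : u ≠ s) (hut : u ≠ t) (hst : s ≠ t)
    (hd : G.dist s u ≤ G.dist t u)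
    (D : ℕ) (hD : D = G.dist t u)
    (Nge Ngt : ℕ → ℕ)
    (hNge : ∀ d, Nge d = ((univ \ {s, t} : Finset V).filter fun v => d ≤ G.dist v u).card)
    (hNgt : ∀ d, Ngt d = ((univ \ {s, t} : Finset V).filter fun v => d < G.dist v u).card)
    (Δ : ℕ) (hΔ : Δ = univ.sup fun v => G.dist v u) :
    ISemi β (nuSingle G f u) s t
      = ∑ k ∈ Finset.range (Fintype.card V - 1),
          β k / ((Fintype.card V - 2).choose k : ℝ) *
            ((∑ d ∈ Finset.Icc (D + 1) Δ,
                f d * (((Nge d).choose k : ℝ) - ((Ngt d).choose k : ℝ)))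
              - f D * ((Ngt D).choose k : ℝ)) :=
  ISemi_nuSingle_closed_form_general G f β u s t hd D hD Nge Ngt hNge hNgt Δ hΔ
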